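/- Contiguous relation II: let q ∈ (0,1), n ≥ 1 an integer, and a, b real numbers with a q^j ≠ 1 for j = 1, …, n+1. Then the polynomial identity (1 − aq)(1 + b q^{n}(a q^{n+1} − aq − 1)) · p_n(x; a, b) = (1 − b q^{n})(1 − a q^{n+1}) · p_n(x; qa, b/q) + a q (1 − q^{n})(1 − a b q^{n+1})(b q x − 1) · p_{n−1}(x; qa, qb) holds for all x. -/
import Mathlib


/-- The q-Pochhammer symbol `(a;q)_k = ∏_{j=0}^{k-1} (1 - a q^j)`. -/
noncomputable def qPoch (q a : ℝ) (k : ℕ) : ℝ :=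
  ∏ j ∈ Finset.range k, (1 - a * q ^ j)

/-- The little q-Jacobi polynomial
`p_n(x; a, b) = ∑_{k=0}^{n} [(q^{−n};q)_k (a b q^{n+1};q)_k / ((a q;q)_k (q;q)_k)] (q x)^k`. -/
noncomputable def littleQJacobi (q a b : ℝ) (n : ℕ) : Polynomial ℝ :=
  ∑ k ∈ Finset.range (n + 1),
    Polynomial.C (qPoch q (q ^ (-(n : ℤ))) k * qPoch q (a * b * q ^ (n + 1)) k /
      (qPoch q (a * q) k * qPoch q q k)) * (Polynomial.C q * Polynomial.X) ^ k

lemma qPoch_succ (q a : ℝ) (k : ℕ) :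
    qPoch q a (k + 1) = qPoch q a k * (1 - a * q ^ k) := Finset.prod_range_succ _ _

lemma qPoch_succ' (q a : ℝ) (k : ℕ) :
    qPoch q a (k + 1) = (1 - a) * qPoch q (a * q) k := by
  rw [qPoch, qPoch, Finset.prod_range_succ', pow_zero, mul_one, mul_comm]
  congr 1
  exact Finset.prod_congr rfl fun j _ => by ring

lemma qPoch_ne_zero {q a : ℝ} {k : ℕ} (h : ∀ j < k, a * q ^ j ≠ 1) : qPoch q a k ≠ 0 := by
  rw [qPoch, Finset.prod_ne_zero_iff]
  intro j hj h0
  exact h j (Finset.mem_range.mp hj) (by linarith)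

lemma qPoch_eq_zero {q a : ℝ} {k j : ℕ} (hj : j < k) (h : a * q ^ j = 1) :
    qPoch q a k = 0 :=
  Finset.prod_eq_zero (Finset.mem_range.mpr hj) (by rw [h]; ring)

lemma eval_littleQJacobi (q a b x u v : ℝ) (n : ℕ)
    (hu : a * b * q ^ (n+1) = u) (hv : a * q = v) :
    (littleQJacobi q a b n).eval x =
      ∑ k ∈ Finset.range (n + 1),
        qPoch q (q ^ (-(n:ℕ) : ℤ)) k * qPoch q u k /
          (qPoch q v k * qPoch q q k) * (q * x) ^ k := by
  rw [← hu, ← hv]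
  simp [littleQJacobi, Polynomial.eval_finset_sum]

lemma key (q a b : ℝ) (p m : ℕ) (hq0 : 0 < q) (hq1 : q < 1) (hm : m ≤ p)
    (ha : ∀ j : ℕ, 1 ≤ j → j ≤ p + 2 → a * q ^ j ≠ 1) :
    (1 - a*q) * (1 + b*q^(p+1)*(a*q^(p+2) - a*q - 1)) *
      (qPoch q (q ^ (-(p+1:ℕ) : ℤ)) (m+1) * qPoch q (a*b*q^(p+2)) (m+1) /
        (qPoch q (a*q) (m+1) * qPoch q q (m+1)))
  = (1 - b*q^(p+1)) * (1 - a*q^(p+2)) *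
      (qPoch q (q ^ (-(p+1:ℕ) : ℤ)) (m+1) * qPoch q (a*b*q^(p+2)) (m+1) /
        (qPoch q (a*q^2) (m+1) * qPoch q q (m+1)))
    + (a*q*(1-q^(p+1))*(1-a*b*q^(p+2))) * b *
      (qPoch q (q ^ (-(p:ℕ) : ℤ)) m * qPoch q (a*b*q^(p+3)) m /
        (qPoch q (a*q^2) m * qPoch q q m))
    - (a*q*(1-q^(p+1))*(1-a*b*q^(p+2))) *
      (qPoch q (q ^ (-(p:ℕ) : ℤ)) (m+1) * qPoch q (a*b*q^(p+3)) (m+1) /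
        (qPoch q (a*q^2) (m+1) * qPoch q q (m+1))) := by
  have hq : q ≠ 0 := ne_of_gt hq0
  have hP : (q:ℝ)^p ≠ 0 := pow_ne_zero _ hq
  have e1 : q ^ (-(p+1:ℕ) : ℤ) = (q^(p+1))⁻¹ := by rw [zpow_neg, zpow_natCast]
  have e2 : q ^ (-(p:ℕ) : ℤ) = (q^p)⁻¹ := by rw [zpow_neg, zpow_natCast]
  rw [e1, e2]
  have r1 : qPoch q ((q^(p+1))⁻¹) (m+1) = (1 - (q^(p+1))⁻¹) * qPoch q ((q^p)⁻¹) m := by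
    rw [qPoch_succ']
    congr 2
    rw [pow_succ, mul_inv]
    field_simp
  have r2 : qPoch q (a*b*q^(p+2)) (m+1) = (1 - a*b*q^(p+2)) * qPoch q (a*b*q^(p+3)) m := by
    rw [qPoch_succ']; congr 2; ring
  have r3 : qPoch q (a*q) (m+1) = (1 - a*q) * qPoch q (a*q^2) m := by
    rw [qPoch_succ']; congr 2; ring
  have r4 : qPoch q q (m+1) = qPoch q q m * (1 - q * q^m) := qPoch_succ _ _ _
  have r5 : qPoch q (a*q^2) (m+1) = qPoch q (a*q^2) m * (1 - a*q^2 * q^m) := qPoch_succ _ _ _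
  have r6 : qPoch q ((q^p)⁻¹) (m+1) = qPoch q ((q^p)⁻¹) m * (1 - (q^p)⁻¹ * q^m) :=
    qPoch_succ _ _ _
  have r7 : qPoch q (a*b*q^(p+3)) (m+1)
      = qPoch q (a*b*q^(p+3)) m * (1 - a*b*q^(p+3) * q^m) := qPoch_succ _ _ _
  rw [r1, r2, r3, r4, r5, r6, r7]
  have haq : 1 - a * q ≠ 0 := by
    intro h; exact ha 1 le_rfl (by omega) (by rw [pow_one]; linarith)
  have hX3 : qPoch q (a*q^2) m ≠ 0 := by
    apply qPoch_ne_zero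
    intro j hj h
    refine ha (j+2) (by omega) (by omega) ?_
    rw [← h]; ring
  have hX4 : qPoch q q m ≠ 0 := by
    apply qPoch_ne_zero
    intro j _ h
    nlinarith [pow_pos hq0 j, pow_le_one₀ (le_of_lt hq0) (le_of_lt hq1) (n := j)]
  have h1qu : 1 - q * q^m ≠ 0 := by
    nlinarith [pow_pos hq0 m, pow_le_one₀ (le_of_lt hq0) (le_of_lt hq1) (n := m)]
  have haqu : 1 - a*q^2*q^m ≠ 0 := by
    intro h
    refine ha (m+2) (by omega) (by omega) ?_
    have : a * q^2 * q^m = 1 := by linarith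
    rw [← this]; ring
  field_simp
  ring

/-- contiguous relation II:
`(1 − aq)(1 + b q^{n}(a q^{n+1} − aq − 1)) p_n(x; a, b)
  = (1 − b q^{n})(1 − a q^{n+1}) p_n(x; qa, b/q)
    + a q (1 − q^{n})(1 − a b q^{n+1})(b q x − 1) p_{n−1}(x; qa, qb)`. -/
theorem littleQJacobi_contiguous_II (q a b : ℝ) (n : ℕ) (hn : 1 ≤ n)
    (hq0 : 0 < q) (hq1 : q < 1)
    (ha : ∀ j : ℕ, 1 ≤ j → j ≤ n + 1 → a * q ^ j ≠ 1) :
    ∀ x : ℝ,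
      (1 - a * q) * (1 + b * q ^ n * (a * q ^ (n + 1) - a * q - 1)) *
          (littleQJacobi q a b n).eval x =
        (1 - b * q ^ n) * (1 - a * q ^ (n + 1)) *
            (littleQJacobi q (q * a) (b / q) n).eval x +
          a * q * (1 - q ^ n) * (1 - a * b * q ^ (n + 1)) * (b * q * x - 1) *
            (littleQJacobi q (q * a) (q * b) (n - 1)).eval x := by
  obtain ⟨p, rfl⟩ : ∃ p, n = p + 1 := ⟨n - 1, (Nat.succ_pred_eq_of_pos hn).symm⟩
  intro x
  have hq : q ≠ 0 := ne_of_gt hq0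
  have hp1 : p + 1 - 1 = p := by omega
  rw [hp1]
  rw [eval_littleQJacobi q a b x (a*b*q^(p+2)) (a*q) (p+1) (by ring) rfl]
  rw [eval_littleQJacobi q (q*a) (b/q) x (a*b*q^(p+2)) (a*q^2) (p+1)
    (by field_simp) (by ring)]
  rw [eval_littleQJacobi q (q*a) (q*b) x (a*b*q^(p+3)) (a*q^2) p
    (by ring) (by ring)]
  -- abbreviations
  set A := (1 - a * q) * (1 + b * q ^ (p+1) * (a * q ^ (p+1+1) - a * q - 1)) with hA
  set B := (1 - b * q ^ (p+1)) * (1 - a * q ^ (p+1+1)) with hB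
  set C := a * q * (1 - q ^ (p+1)) * (1 - a * b * q ^ (p+1+1)) with hC
  set f : ℕ → ℝ := fun k => qPoch q (q ^ (-(p+1:ℕ) : ℤ)) k * qPoch q (a*b*q^(p+2)) k /
      (qPoch q (a*q) k * qPoch q q k) * (q*x)^k with hf
  set g : ℕ → ℝ := fun k => qPoch q (q ^ (-(p+1:ℕ) : ℤ)) k * qPoch q (a*b*q^(p+2)) k /
      (qPoch q (a*q^2) k * qPoch q q k) * (q*x)^k with hg
  set h : ℕ → ℝ := fun k => qPoch q (q ^ (-(p:ℕ) : ℤ)) k * qPoch q (a*b*q^(p+3)) k /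
      (qPoch q (a*q^2) k * qPoch q q k) * (q*x)^k with hh
  have hzero : h (p+1) = 0 := by
    rw [hh]
    have : qPoch q (q ^ (-(p:ℕ) : ℤ)) (p+1) = 0 := by
      refine qPoch_eq_zero (Nat.lt_succ_self p) ?_
      rw [zpow_neg, zpow_natCast]
      field_simp
    simp only [hh, this, zero_mul, zero_div]
  have keyx : ∀ m ∈ Finset.range (p+1),
      A * f (m+1) = B * g (m+1) + C * b * (q*x) * h m - C * h (m+1) := by
    intro m hm
    have hm' : m ≤ p := by
      have := Finset.mem_range.mp hm; omega
    have k := key q a b p m hq0 hq1 hm' (fun j h1 h2 => ha j h1 (by omega))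
    rw [hA, hB, hC, hf, hg, hh]
    simp only
    have hpow : (q*x)^(m+1) = (q*x)^m * (q*x) := pow_succ _ _
    linear_combination (q*x)^(m+1) * k
  have key0 : A * f 0 = B * g 0 - C * h 0 := by
    rw [hA, hB, hC, hf, hg, hh]
    simp [qPoch]
    ring
  calc A * ∑ k ∈ Finset.range (p+1+1), f k
      = ∑ k ∈ Finset.range (p+1+1), A * f k := Finset.mul_sum _ _ _
    _ = (∑ m ∈ Finset.range (p+1), A * f (m+1)) + A * f 0 :=
        Finset.sum_range_succ' _ _
    _ = (∑ m ∈ Finset.range (p+1), (B * g (m+1) + C * b * (q*x) * h m - C * h (m+1)))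
          + (B * g 0 - C * h 0) := by
        rw [key0, Finset.sum_congr rfl keyx]
    _ = ((∑ m ∈ Finset.range (p+1), B * g (m+1)) + B * g 0)
        + (C * b * (q*x)) * (∑ m ∈ Finset.range (p+1), h m)
        - ((∑ m ∈ Finset.range (p+1), C * h (m+1)) + C * h 0) := by
        rw [Finset.sum_sub_distrib, Finset.sum_add_distrib, Finset.mul_sum]
        ring
    _ = B * (∑ k ∈ Finset.range (p+1+1), g k)
        + C * (b * q * x - 1) * (∑ k ∈ Finset.range (p+1), h k) := by
        rw [← Finset.sum_range_succ' (fun k => B * g k) (p+1),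
          ← Finset.sum_range_succ' (fun k => C * h k) (p+1),
          Finset.sum_range_succ (fun k => C * h k) (p+1), hzero,
          ← Finset.mul_sum, ← Finset.mul_sum]
        ring
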